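/- Let B be a real m×n matrix whose columns indexed by a set Λ are linearly independent, and let y ∈ ℝ^m. If the vector (B_Λ)⁺ y (the least-squares solution restricted to columns in Λ) has all strictly positive entries, and for every column index i outside Λ the inner product yᵀ P_Λ^⊥ b_i is strictly negative (where P_Λ^⊥ is the orthogonal projector onto the orthogonal complement of the column space of B_Λ and b_i is the i-th column of B), then the minimizer δ* of min_{δ ⪰ 0} ‖y − Bδ‖² has support exactly equal to Λ. -/
import Mathlib


open Matrix

variable {m n : ℕ}

/-- Squared Euclidean norm of a real vector. -/
def sqn {k : ℕ} (v : Fin k → ℝ) : ℝ := ∑ i, v i ^ 2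

/-- Submatrix of the columns of `B` with indices in `Λ`. -/
noncomputable def colSub (B : Matrix (Fin m) (Fin n) ℝ) (Λ : Finset (Fin n)) :
    Matrix (Fin m) {i // i ∈ Λ} ℝ := Matrix.of fun r j => B r j.1

/-- Pseudoinverse `(B_Λᵀ B_Λ)⁻¹ B_Λᵀ` of the column submatrix `B_Λ`. -/
noncomputable def pinvSub (B : Matrix (Fin m) (Fin n) ℝ) (Λ : Finset (Fin n)) :
    Matrix {i // i ∈ Λ} (Fin m) ℝ :=
  ((colSub B Λ)ᵀ * colSub B Λ)⁻¹ * (colSub B Λ)ᵀ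

/-- Orthogonal projector onto the orthogonal complement of the column space of `B_Λ`. -/
noncomputable def projPerp (B : Matrix (Fin m) (Fin n) ℝ) (Λ : Finset (Fin n)) :
    Matrix (Fin m) (Fin m) ℝ := 1 - colSub B Λ * pinvSub B Λ

lemma sqn_eq_dot {k : ℕ} (v : Fin k → ℝ) : sqn v = v ⬝ᵥ v := by
  simp [sqn, dotProduct, sq]

lemma sqn_nonneg' {k : ℕ} (v : Fin k → ℝ) : 0 ≤ sqn v :=
  Finset.sum_nonneg fun i _ => sq_nonneg _

lemma sqn_eq_zero' {k : ℕ} {v : Fin k → ℝ} (h : sqn v = 0) : v = 0 := by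
  funext i
  have := (Finset.sum_eq_zero_iff_of_nonneg (fun i _ => sq_nonneg (v i))).1 h i (Finset.mem_univ i)
  exact pow_eq_zero_iff two_ne_zero |>.1 this

lemma sqn_sub {k : ℕ} (e w : Fin k → ℝ) :
    sqn (e - w) = sqn e - 2 * (e ⬝ᵥ w) + sqn w := by
  simp only [sqn_eq_dot, sub_dotProduct, dotProduct_sub, dotProduct_comm w e]
  ring

/-- Support recovery: conditions C1 and C2 imply the support of any NNLS minimizer is `Λ`. -/
theorem nnls_support_recovery (B : Matrix (Fin m) (Fin n) ℝ) (y : Fin m → ℝ)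
    (Λ : Finset (Fin n))
    (hLI : LinearIndependent ℝ fun j : {i // i ∈ Λ} => (fun r => B r j.1 : Fin m → ℝ))
    (hC1 : ∀ j : {i // i ∈ Λ}, 0 < (pinvSub B Λ).mulVec y j)
    (hC2 : ∀ i ∉ Λ, dotProduct y ((projPerp B Λ).mulVec fun r => B r i) < 0)
    (δs : Fin n → ℝ) (hpos : ∀ j, 0 ≤ δs j)
    (hmin : ∀ δ : Fin n → ℝ, (∀ j, 0 ≤ δ j) →
      sqn (y - B.mulVec δs) ≤ sqn (y - B.mulVec δ)) :
    ∀ j, 0 < δs j ↔ j ∈ Λ := by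
  classical
  set A := colSub B Λ with hA
  set G := Aᵀ * A with hG
  -- injectivity of v ↦ A *ᵥ v
  have hAinj : ∀ v : {i // i ∈ Λ} → ℝ, A *ᵥ v = 0 → v = 0 := by
    intro v hv
    have h := Fintype.linearIndependent_iff.mp hLI v ?_
    · funext j; exact h j
    · funext r
      have hr := congrFun hv r
      simp only [hA, colSub, mulVec, dotProduct, Matrix.of_apply] at hr
      simpa [Finset.sum_apply, mul_comm] using hr
  -- Gram matrix invertible
  have hGdet : IsUnit G.det := by
    rw [isUnit_iff_ne_zero]
    intro hdet
    obtain ⟨v, hvne, hv0⟩ := Matrix.exists_mulVec_eq_zero_iff.mpr hdet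
    apply hvne
    apply hAinj
    apply sqn_eq_zero'
    have h1 : v ⬝ᵥ (G *ᵥ v) = (A *ᵥ v) ⬝ᵥ (A *ᵥ v) := by
      conv_lhs => rw [hG, ← mulVec_mulVec, dotProduct_mulVec, vecMul_transpose]
    rw [sqn_eq_dot, ← h1, hv0, dotProduct_zero]
  set x : {i // i ∈ Λ} → ℝ := (pinvSub B Λ).mulVec y with hx
  have hAx : A *ᵥ x = (A * (G⁻¹ * Aᵀ)) *ᵥ y := by
    rw [hx, pinvSub, mulVec_mulVec]
  -- normal equations
  have hnorm : Aᵀ *ᵥ (y - A *ᵥ x) = 0 := by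
    rw [mulVec_sub, hAx, mulVec_mulVec, ← Matrix.mul_assoc, ← Matrix.mul_assoc, ← hG,
      Matrix.mul_nonsing_inv _ hGdet, Matrix.one_mul, sub_self]
  set e : Fin m → ℝ := y - A *ᵥ x with he
  set c : Fin n → ℝ := Bᵀ *ᵥ e with hc
  have hcΛ : ∀ j (hj : j ∈ Λ), c j = 0 := by
    intro j hj
    have := congrFun hnorm ⟨j, hj⟩
    simpa [hc, hA, colSub, mulVec, dotProduct, Matrix.transpose_apply] using this
  have hcneg : ∀ i ∉ Λ, c i < 0 := by
    intro i hi
    have h2 := hC2 i hi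
    -- P := projPerp is symmetric, P *ᵥ y = e
    set P := projPerp B Λ with hP
    have hPsymm : Pᵀ = P := by
      rw [hP, projPerp, Matrix.transpose_sub, Matrix.transpose_one, Matrix.transpose_mul,
        pinvSub, Matrix.transpose_mul, Matrix.transpose_transpose, Matrix.transpose_nonsing_inv,
        Matrix.transpose_mul, Matrix.transpose_transpose]
      rw [← Matrix.mul_assoc]
    have hPy : P *ᵥ y = e := by
      rw [hP, projPerp, Matrix.sub_mulVec, Matrix.one_mulVec, he, hAx, pinvSub, ← hA, ← hG]
    have : c i = y ⬝ᵥ (P *ᵥ fun r => B r i) := by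
      calc c i = (fun r => B r i) ⬝ᵥ e := by
            simp [hc, mulVec, dotProduct, Matrix.transpose_apply]
        _ = (fun r => B r i) ⬝ᵥ (P *ᵥ y) := by rw [hPy]
        _ = (Pᵀ *ᵥ fun r => B r i) ⬝ᵥ y := by
            rw [dotProduct_mulVec, ← mulVec_transpose, dotProduct_comm]
        _ = y ⬝ᵥ (P *ᵥ fun r => B r i) := by rw [hPsymm, dotProduct_comm]
    rw [this]; exact h2
  -- the candidate
  set δh : Fin n → ℝ := fun j => if h : j ∈ Λ then x ⟨j, h⟩ else 0 with hδh
  have hδhpos : ∀ j, 0 ≤ δh j := by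
    intro j; by_cases h : j ∈ Λ
    · simp [hδh, h]; exact (hC1 ⟨j, h⟩).le
    · simp [hδh, h]
  have key : ∀ δ : Fin n → ℝ, (∀ i ∉ Λ, δ i = 0) → B *ᵥ δ = A *ᵥ (fun j => δ j.1) := by
    intro δ hδ; funext r
    show ∑ j, B r j * δ j = ∑ j : {i // i ∈ Λ}, A r j * δ j.1
    have h2 : ∑ j : {i // i ∈ Λ}, A r j * δ j.1 = ∑ j ∈ Λ, B r j * δ j := by
      rw [← Finset.sum_coe_sort Λ (fun j => B r j * δ j)]
      rfl
    rw [h2]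
    exact (Finset.sum_subset Λ.subset_univ
      (fun i _ hi => by rw [hδ i hi, mul_zero])).symm
  have hBδh : B *ᵥ δh = A *ᵥ x := by
    rw [key δh (fun i hi => by simp [hδh, hi])]
    congr 1; funext j; simp [hδh, j.2]
  have expand : ∀ δ : Fin n → ℝ,
      sqn (y - B *ᵥ δ) = sqn e + sqn (B *ᵥ (δ - δh)) - 2 * (c ⬝ᵥ (δ - δh)) := by
    intro δ
    have h1 : y - B *ᵥ δ = e - B *ᵥ (δ - δh) := by
      rw [Matrix.mulVec_sub, he, hBδh]; abel
    have h3 : e ⬝ᵥ (B *ᵥ (δ - δh)) = c ⬝ᵥ (δ - δh) := by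
      rw [dotProduct_mulVec, hc, mulVec_transpose]
    rw [h1, sqn_sub, h3]; ring
  -- apply minimality at the candidate δh
  have hδseq : sqn (y - B *ᵥ δs) ≤ sqn e := by
    have := hmin δh hδhpos
    calc sqn (y - B *ᵥ δs) ≤ sqn (y - B *ᵥ δh) := this
      _ = sqn e := by rw [expand δh]; simp [sqn, Matrix.mulVec_zero]
  have hterm : ∀ i, c i * (δs i - δh i) ≤ 0 := by
    intro i
    by_cases h : i ∈ Λ
    · rw [hcΛ i h, zero_mul]
    · have : δh i = 0 := by simp [hδh, h]
      rw [this, sub_zero]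
      exact mul_nonpos_of_nonpos_of_nonneg (hcneg i h).le (hpos i)
  have hT : c ⬝ᵥ (δs - δh) ≤ 0 := Finset.sum_nonpos fun i _ => hterm i
  have hsq : sqn (B *ᵥ (δs - δh)) = 0 ∧ c ⬝ᵥ (δs - δh) = 0 := by
    have h4 := hδseq
    rw [expand δs] at h4
    constructor
    · nlinarith [sqn_nonneg' (B *ᵥ (δs - δh))]
    · nlinarith [sqn_nonneg' (B *ᵥ (δs - δh))]
  -- off-support entries vanish
  have hoff : ∀ i ∉ Λ, δs i = 0 := by
    intro i hi
    have h5 := (Finset.sum_eq_zero_iff_of_nonpos (fun i _ => hterm i)).1 hsq.2 i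
      (Finset.mem_univ i)
    have hδhi : δh i = 0 := by simp [hδh, hi]
    rw [hδhi, sub_zero] at h5
    rcases mul_eq_zero.1 h5 with h | h
    · exact absurd h (ne_of_lt (hcneg i hi))
    · exact h
  -- on-support entries agree with x
  have hon : ∀ j (hj : j ∈ Λ), δs j = x ⟨j, hj⟩ := by
    have hv0 : B *ᵥ (δs - δh) = 0 := sqn_eq_zero' hsq.1
    have hvan : ∀ i ∉ Λ, (δs - δh) i = 0 := by
      intro i hi
      have : δh i = 0 := by simp [hδh, hi]
      simp [Pi.sub_apply, this, hoff i hi]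
    rw [key _ hvan] at hv0
    have := hAinj _ hv0
    intro j hj
    have h6 := congrFun this ⟨j, hj⟩
    simp only [Pi.sub_apply, Pi.zero_apply] at h6
    have h7 : δh j = x ⟨j, hj⟩ := by simp [hδh, hj]
    linarith [h6, h7.symm ▸ h6]
  intro j
  constructor
  · intro h
    by_contra hj
    rw [hoff j hj] at h
    exact lt_irrefl 0 h
  · intro hj
    rw [hon j hj]
    exact hC1 ⟨j, hj⟩
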